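/- Let (f_n)_{n≥1} be a sequence of holomorphic self-maps of the unit disk 𝔻 whose forward iterates F_n := f_n ∘ ⋯ ∘ f_1 converge locally uniformly on 𝔻 to a nonconstant holomorphic self-map F of 𝔻. Then for each N ∈ ℕ there exists a nonconstant holomorphic self-map H_N of 𝔻 such that F = H_N ∘ F_N; moreover, the maps h_{N,n} := f_{N+n} ∘ ⋯ ∘ f_{N+1} converge locally uniformly on 𝔻 to H_N as n → ∞. -/

import Mathlib

/-!
Write `h N n` for the tail composition, so that `F (N + n) = h N n ∘ F N`. Then `h N n` converges
pointwise to `Flim` along `F N`, i.e. on the set `F N '' 𝔻`, which is open by the open mapping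
theorem because `F N` cannot be constant when `Flim` is not. The maps `h N n` are bounded by `1`,
so Vitali's theorem upgrades this to locally uniform convergence on all of `𝔻`: near a point where
they converge pointwise, the Taylor coefficients converge (Cauchy integral formula and dominated
convergence), and the Cauchy estimates make the Taylor series converge uniformly on every smaller
disc; a connectedness argument spreads this over `𝔻`. The limit `H` is holomorphic,
`Flim = H ∘ F N`, and `H` is nonconstant, hence open, hence maps `𝔻` into the open disc.
-/

open Filter Metric Set Topology

noncomputable section

/-- The open unit disk in the complex plane. -/
def unitDisk : Set ℂ := Metric.ball (0 : ℂ) 1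

/-- A holomorphic self-map of the unit disk. -/
def IsHolSelfMap (f : ℂ → ℂ) : Prop :=
  DifferentiableOn ℂ f unitDisk ∧ Set.MapsTo f unitDisk unitDisk

section Vitali

variable {E : Type*} [NormedAddCommGroup E] [NormedSpace ℂ E]

theorem tendsto_circleIntegral_of_dominated_convergence {F : ℕ → ℂ → E} {G : ℂ → E} {c : ℂ}
    {R C : ℝ} (hR : 0 ≤ R) (hF : ∀ n, ContinuousOn (F n) (sphere c R))
    (hC : ∀ n, ∀ z ∈ sphere c R, ‖F n z‖ ≤ C)
    (hFG : ∀ z ∈ sphere c R, Tendsto (F · z) atTop (𝓝 (G z))) :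
    Tendsto (fun n => ∮ z in C(c, R), F n z) atTop (𝓝 (∮ z in C(c, R), G z)) := by
  have hmem := circleMap_mem_sphere c hR
  refine intervalIntegral.tendsto_integral_filter_of_dominated_convergence (fun _ => R * C)
    (.of_forall fun n => ?_) (.of_forall fun n => .of_forall fun θ _ => ?_)
    intervalIntegrable_const (.of_forall fun θ _ => (hFG _ (hmem θ)).const_smul _)
  · have : Continuous fun θ => deriv (circleMap c R) θ • F n (circleMap c R θ) := by
      simp only [deriv_circleMap]
      exact ((continuous_circleMap 0 R).mul continuous_const).smul
        ((hF n).comp_continuous (continuous_circleMap c R) hmem)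
    exact this.aestronglyMeasurable
  · simpa [norm_smul, abs_of_nonneg hR] using
      mul_le_mul_of_nonneg_left (hC n _ (hmem θ)) hR

theorem cauchySeq_iteratedDeriv [CompleteSpace E] {g : ℕ → ℂ → E} {a : ℂ} {r M : ℝ} (hr : 0 < r)
    (hg : ∀ n, DifferentiableOn ℂ (g n) (closedBall a r))
    (hM : ∀ n, ∀ z ∈ sphere a r, ‖g n z‖ ≤ M)
    (hc : ∀ z ∈ sphere a r, CauchySeq fun n => g n z) (k : ℕ) :
    CauchySeq fun n => iteratedDeriv k (g n) a := by
  have hne : (2 * Real.pi * Complex.I / k.factorial : ℂ) ≠ 0 := by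
    simp [Nat.factorial_ne_zero]
  have hderiv : ∀ n, iteratedDeriv k (g n) a =
      (2 * Real.pi * Complex.I / k.factorial : ℂ)⁻¹ •
        ∮ z in C(a, r), (1 / (z - a) ^ (k + 1)) • g n z := fun n => by
    rw [(hg n).circleIntegral_one_div_sub_center_pow_smul hr k, inv_smul_smul₀ hne]
  have hkernel : ContinuousOn (fun z : ℂ => 1 / (z - a) ^ (k + 1)) (sphere a r) :=
    continuousOn_const.div (by fun_prop) fun z hz =>
      pow_ne_zero _ (sub_ne_zero.2 (ne_of_mem_sphere hz hr.ne'))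
  have hbound : ∀ n, ∀ z ∈ sphere a r, ‖(1 / (z - a) ^ (k + 1)) • g n z‖ ≤ M / r ^ (k + 1) := by
    intro n z hz
    rw [norm_smul, norm_div, norm_one, norm_pow, mem_sphere_iff_norm.1 hz, one_div_mul_eq_div]
    gcongr
    exact hM n z hz
  simp only [hderiv]
  exact (Tendsto.const_smul (tendsto_circleIntegral_of_dominated_convergence
    (F := fun n z => (1 / (z - a) ^ (k + 1)) • g n z)
    (G := fun z => (1 / (z - a) ^ (k + 1)) • limUnder atTop fun n => g n z) hr.le
    (fun n => hkernel.smul ((hg n).continuousOn.mono sphere_subset_closedBall)) hbound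
    fun z hz => (hc z hz).tendsto_limUnder.const_smul _) _).cauchySeq

theorem uniformCauchySeqOn_closedBall_of_cauchySeq_iteratedDeriv [CompleteSpace E]
    {g : ℕ → ℂ → E} {a : ℂ} {R ρ M : ℝ}
    (hg : ∀ n, DifferentiableOn ℂ (g n) (ball a R)) (hM : ∀ n, ∀ z ∈ ball a R, ‖g n z‖ ≤ M)
    (hρ : 0 ≤ ρ) (hρR : ρ < R) (hd : ∀ k, CauchySeq fun n => iteratedDeriv k (g n) a) :
    UniformCauchySeqOn g atTop (closedBall a ρ) := by
  obtain ⟨R', hρR', hR'R⟩ := exists_between hρR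
  have hR' : 0 < R' := hρ.trans_lt hρR'
  have hR'sub : closedBall a R' ⊆ ball a R := closedBall_subset_ball hR'R
  set d : ℕ → ℕ → E := fun n k => iteratedDeriv k (g n) a
  have hdM : ∀ n k, ‖d n k‖ ≤ k.factorial * M / R' ^ k := fun n k =>
    Complex.norm_iteratedDeriv_le_of_forall_mem_sphere_norm_le k hR'
      (((hg n).mono hR'sub).diffContOnCl_ball le_rfl)
      (fun z hz => hM n z (hR'sub (sphere_subset_closedBall hz)))
  -- the Cauchy estimates dominate the Taylor series on `closedBall a ρ` by a geometric series
  have hterm : ∀ m n k, (k.factorial : ℝ)⁻¹ * ρ ^ k * dist (d m k) (d n k) ≤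
      2 * M * (ρ / R') ^ k := by
    intro m n k
    calc _ ≤ (k.factorial : ℝ)⁻¹ * ρ ^ k *
          (k.factorial * M / R' ^ k + k.factorial * M / R' ^ k) := by
          gcongr
          exact (dist_le_norm_add_norm _ _).trans (add_le_add (hdM m k) (hdM n k))
      _ = 2 * M * (ρ / R') ^ k := by rw [div_pow]; field_simp; ring
  have hsum : Summable fun k => 2 * M * (ρ / R') ^ k :=
    (summable_geometric_of_lt_one (div_nonneg hρ hR'.le) ((div_lt_one hR').2 hρR')).mul_left _
  set T : ℕ × ℕ → ℝ := fun p => ∑' k, (k.factorial : ℝ)⁻¹ * ρ ^ k * dist (d p.1 k) (d p.2 k)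
  have hT : Tendsto T atTop (𝓝 0) := by
    simpa using tendsto_tsum_of_dominated_convergence hsum (g := fun _ => (0 : ℝ))
      (fun k => by simpa using ((cauchySeq_iff_tendsto_dist_atTop_0.1 (hd k)).const_mul
        ((k.factorial : ℝ)⁻¹ * ρ ^ k)))
      (.of_forall fun p k => by rw [Real.norm_of_nonneg (by positivity)]; exact hterm _ _ k)
  have hdist : ∀ p : ℕ × ℕ, ∀ z ∈ closedBall a ρ, dist (g p.1 z) (g p.2 z) ≤ T p := by
    rintro ⟨m, n⟩ z hz
    have hzR : z ∈ ball a R := closedBall_subset_ball hρR hz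
    have htaylor := (Complex.hasSum_taylorSeries_on_ball (hg m) hzR).sub
      (Complex.hasSum_taylorSeries_on_ball (hg n) hzR)
    rw [dist_eq_norm]
    refine htaylor.norm_le_of_bounded
      ((hsum.of_nonneg_of_le (fun k => by positivity) (hterm m n)).hasSum) fun k => ?_
    rw [← smul_sub, ← smul_sub, norm_smul, norm_smul, norm_inv, norm_pow, Complex.norm_natCast,
      ← mul_assoc]
    gcongr
    · exact mem_closedBall_iff_norm.1 hz
    · exact (dist_eq_norm _ _).ge
  intro u hu
  obtain ⟨δ, hδ, hδu⟩ := Metric.mem_uniformity_dist.1 hu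
  rw [prod_atTop_atTop_eq]
  filter_upwards [hT.eventually (gt_mem_nhds hδ)] with p hp z hz
    using hδu ((hdist p z hz).trans_lt hp)

theorem uniformCauchySeqOn_closedBall_of_eventually_cauchySeq [CompleteSpace E]
    {g : ℕ → ℂ → E} {a : ℂ} {R ρ M : ℝ}
    (hg : ∀ n, DifferentiableOn ℂ (g n) (ball a R)) (hM : ∀ n, ∀ z ∈ ball a R, ‖g n z‖ ≤ M)
    (hρ : 0 ≤ ρ) (hρR : ρ < R) (hc : ∀ᶠ w in 𝓝 a, CauchySeq fun n => g n w) :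
    UniformCauchySeqOn g atTop (closedBall a ρ) := by
  obtain ⟨ε, hε, hεc⟩ := Metric.eventually_nhds_iff_ball.1 hc
  set r := min (ε / 2) (R / 2)
  have hr : 0 < r := lt_min (half_pos hε) (half_pos (hρ.trans_lt hρR))
  have hrε : closedBall a r ⊆ ball a ε :=
    closedBall_subset_ball ((min_le_left _ _).trans_lt (half_lt_self hε))
  have hrR : closedBall a r ⊆ ball a R :=
    closedBall_subset_ball ((min_le_right _ _).trans_lt (half_lt_self (hρ.trans_lt hρR)))
  exact uniformCauchySeqOn_closedBall_of_cauchySeq_iteratedDeriv hg hM hρ hρR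
    (cauchySeq_iteratedDeriv hr (fun n => (hg n).mono hrR)
      (fun n z hz => hM n z (hrR (sphere_subset_closedBall hz)))
      (fun z hz => hεc z (hrε (sphere_subset_closedBall hz))))

theorem exists_tendstoLocallyUniformlyOn_of_eventually_cauchySeq [CompleteSpace E]
    {g : ℕ → ℂ → E} {U : Set ℂ} {M : ℝ} (hU : IsOpen U) (hUc : IsPreconnected U)
    (hg : ∀ n, DifferentiableOn ℂ (g n) U) (hM : ∀ n, ∀ z ∈ U, ‖g n z‖ ≤ M)
    (hc : ∃ z₀ ∈ U, ∀ᶠ w in 𝓝 z₀, CauchySeq fun n => g n w) :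
    ∃ G, TendstoLocallyUniformlyOn g G atTop U := by
  set S := {a | ∀ᶠ w in 𝓝 a, CauchySeq fun n => g n w}
  have hball {b : ℂ} {R ρ : ℝ} (hbR : ball b R ⊆ U) (hρ : 0 ≤ ρ) (hρR : ρ < R) (hb : b ∈ S) :
      UniformCauchySeqOn g atTop (closedBall b ρ) :=
    uniformCauchySeqOn_closedBall_of_eventually_cauchySeq
      (fun n => (hg n).mono hbR) (fun n z hz => hM n z (hbR hz)) hρ hρR hb
  have hUS : U ⊆ S := by
    obtain ⟨z₀, hz₀U, hz₀⟩ := hc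
    refine hUc.subset_of_closure_inter_subset isOpen_setOfPred_eventually_nhds ⟨z₀, hz₀U, hz₀⟩ ?_
    rintro a ⟨haS, haU⟩
    obtain ⟨r, hr, har⟩ := Metric.isOpen_iff.1 hU a haU
    obtain ⟨b, hbS, hab⟩ := Metric.mem_closure_iff.1 haS (r / 3) (by positivity)
    have hbr : ball b (2 * r / 3) ⊆ U :=
      (ball_subset_ball' (by linarith [dist_comm a b])).trans har
    have hUC := hball hbr (ρ := r / 2) (by positivity) (by linarith) hbS
    filter_upwards [ball_mem_nhds a (by positivity : 0 < r / 6)] with w hw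
    exact hUC.cauchySeq (mem_closedBall.2 (by linarith [dist_triangle w a b, mem_ball.1 hw]))
  refine ⟨fun z => limUnder atTop fun n => g n z,
    tendstoLocallyUniformlyOn_of_forall_exists_nhds fun a ha => ?_⟩
  obtain ⟨r, hr, har⟩ := Metric.isOpen_iff.1 hU a ha
  have hUC := hball har (ρ := r / 2) (by positivity) (half_lt_self hr) (hUS ha)
  exact ⟨closedBall a (r / 2), mem_nhdsWithin_of_mem_nhds (closedBall_mem_nhds a (by positivity)),
    hUC.tendstoUniformlyOn_of_tendsto fun z hz => (hUC.cauchySeq hz).tendsto_limUnder⟩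

end Vitali

theorem isOpen_image_of_exists_ne {f : ℂ → ℂ} {U : Set ℂ} (hU : IsOpen U)
    (hUc : IsPreconnected U) (hf : DifferentiableOn ℂ f U)
    (hne : ∃ z ∈ U, ∃ w ∈ U, f z ≠ f w) : IsOpen (f '' U) := by
  obtain ⟨c, hc⟩ | hopen := (hf.analyticOnNhd hU).is_constant_or_isOpen hUc
  · obtain ⟨z, hz, w, hw, hzw⟩ := hne
    exact absurd ((hc z hz).trans (hc w hw).symm) hzw
  · exact hopen U Subset.rfl hU

theorem isOpen_unitDisk : IsOpen unitDisk := isOpen_ball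

theorem isPreconnected_unitDisk : IsPreconnected unitDisk := (convex_ball 0 1).isPreconnected

theorem IsHolSelfMap.norm_lt_one {f : ℂ → ℂ} (hf : IsHolSelfMap f) {z : ℂ} (hz : z ∈ unitDisk) :
    ‖f z‖ < 1 :=
  mem_ball_zero_iff.1 (hf.2 hz)

theorem IsHolSelfMap.comp {f g : ℂ → ℂ} (hf : IsHolSelfMap f) (hg : IsHolSelfMap g) :
    IsHolSelfMap (f ∘ g) :=
  ⟨hf.1.comp hg.1 hg.2, hf.2.comp hg.2⟩

theorem isHolSelfMap_of_zero_of_succ {φ ψ : ℕ → ℂ → ℂ} (hψ : ∀ n, IsHolSelfMap (ψ n))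
    (h0 : ∀ z, φ 0 z = z) (hsucc : ∀ n z, φ (n + 1) z = ψ n (φ n z)) (n : ℕ) :
    IsHolSelfMap (φ n) := by
  induction n with
  | zero => rw [funext h0]; exact ⟨differentiableOn_id, mapsTo_id _⟩
  | succ n ih => rw [show φ (n + 1) = ψ n ∘ φ n from funext (hsucc n)]; exact (hψ n).comp ih

/-- An open map cannot attain the boundary of `closedBall 0 1`. -/
theorem isHolSelfMap_of_norm_le_one {f : ℂ → ℂ} (hf : DifferentiableOn ℂ f unitDisk)
    (hle : ∀ z ∈ unitDisk, ‖f z‖ ≤ 1) (hne : ∃ z ∈ unitDisk, ∃ w ∈ unitDisk, f z ≠ f w) :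
    IsHolSelfMap f := by
  have himage : f '' unitDisk ⊆ closedBall 0 1 := by
    rintro _ ⟨z, hz, rfl⟩
    exact mem_closedBall_zero_iff.2 (hle z hz)
  have hopen := isOpen_image_of_exists_ne isOpen_unitDisk isPreconnected_unitDisk hf hne
  refine ⟨hf, fun z hz => ?_⟩
  have := hopen.subset_interior_iff.2 himage (mem_image_of_mem f hz)
  rwa [interior_closedBall _ one_ne_zero] at this

theorem forward_comp_add_eq_tail_comp {α : Type*} {f F : ℕ → α → α} {h : ℕ → ℕ → α → α}
    (hFrec : ∀ n z, F (n + 1) z = f (n + 1) (F n z)) (hh0 : ∀ N z, h N 0 z = z)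
    (hhrec : ∀ N n z, h N (n + 1) z = f (N + n + 1) (h N n z)) (N n : ℕ) (z : α) :
    F (n + N) z = h N n (F N z) := by
  induction n generalizing z with
  | zero => rw [Nat.zero_add, hh0]
  | succ n ih => rw [Nat.add_right_comm, hFrec, ih, hhrec, Nat.add_comm N n]

theorem stmt_11_general
    (f F : ℕ → ℂ → ℂ) (Flim : ℂ → ℂ) (h : ℕ → ℕ → ℂ → ℂ)
    (hf : ∀ n : ℕ, IsHolSelfMap (f (n + 1)))
    (hF0 : ∀ z, F 0 z = z)
    (hFrec : ∀ n z, F (n + 1) z = f (n + 1) (F n z))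
    (hconv : TendstoLocallyUniformlyOn F Flim atTop unitDisk)
    (hnc : ∃ z ∈ unitDisk, ∃ w ∈ unitDisk, Flim z ≠ Flim w)
    (hh0 : ∀ N z, h N 0 z = z)
    (hhrec : ∀ N n z, h N (n + 1) z = f (N + n + 1) (h N n z)) :
    ∀ N : ℕ, ∃ H : ℂ → ℂ, IsHolSelfMap H ∧
      (∃ z ∈ unitDisk, ∃ w ∈ unitDisk, H z ≠ H w) ∧
      (∀ z ∈ unitDisk, Flim z = H (F N z)) ∧
      TendstoLocallyUniformlyOn (fun n : ℕ => h N n) H atTop unitDisk := by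
  intro N
  have hFself := isHolSelfMap_of_zero_of_succ hf hF0 hFrec
  have hhself := isHolSelfMap_of_zero_of_succ (fun n => hf (N + n)) (hh0 N) (hhrec N)
  have hcomp := forward_comp_add_eq_tail_comp hFrec hh0 hhrec N
  have hlim : ∀ z ∈ unitDisk, Tendsto (fun n => h N n (F N z)) atTop (𝓝 (Flim z)) :=
    fun z hz => by
      simpa only [Function.comp_def, hcomp] using
        (hconv.tendsto_at hz).comp (tendsto_add_atTop_nat N)
  obtain ⟨z₀, hz₀, w₀, hw₀, hne⟩ := hnc
  have hFNne : F N z₀ ≠ F N w₀ := fun heq =>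
    hne (tendsto_nhds_unique (hlim z₀ hz₀) (heq ▸ hlim w₀ hw₀))
  have hopen := isOpen_image_of_exists_ne isOpen_unitDisk isPreconnected_unitDisk (hFself N).1
    ⟨z₀, hz₀, w₀, hw₀, hFNne⟩
  obtain ⟨H, hH⟩ := exists_tendstoLocallyUniformlyOn_of_eventually_cauchySeq isOpen_unitDisk
    isPreconnected_unitDisk (fun n => (hhself n).1) (fun n z hz => ((hhself n).norm_lt_one hz).le)
    ⟨F N z₀, (hFself N).2 hz₀, by
      filter_upwards [hopen.mem_nhds (mem_image_of_mem _ hz₀)]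
      rintro _ ⟨z, hz, rfl⟩
      exact (hlim z hz).cauchySeq⟩
  have hHF : ∀ z ∈ unitDisk, Flim z = H (F N z) := fun z hz =>
    tendsto_nhds_unique (hlim z hz) (hH.tendsto_at ((hFself N).2 hz))
  have hHne : ∃ z ∈ unitDisk, ∃ w ∈ unitDisk, H z ≠ H w :=
    ⟨F N z₀, (hFself N).2 hz₀, F N w₀, (hFself N).2 hw₀, by rwa [← hHF z₀ hz₀, ← hHF w₀ hw₀]⟩
  have hHle : ∀ z ∈ unitDisk, ‖H z‖ ≤ 1 := fun z hz =>
    le_of_tendsto (hH.tendsto_at hz).norm (.of_forall fun n => ((hhself n).norm_lt_one hz).le)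
  exact ⟨H, isHolSelfMap_of_norm_le_one
    (hH.differentiableOn (.of_forall fun n => (hhself n).1) isOpen_unitDisk) hHle hHne,
    hHne, hHF, hH⟩

/-- If the forward iterates `F n` of holomorphic self-maps `(f n)` of the
unit disk converge locally uniformly to a nonconstant holomorphic self-map `Flim`, then for
each `N` there is a nonconstant holomorphic self-map `H` with `Flim = H ∘ F N` on the disk,
and the partial compositions `h N n = f (N+n) ∘ ⋯ ∘ f (N+1)` converge locally uniformly on
the disk to `H`. -/
theorem stmt_11
    (f F : ℕ → ℂ → ℂ) (Flim : ℂ → ℂ) (h : ℕ → ℕ → ℂ → ℂ)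
    (hf : ∀ n : ℕ, IsHolSelfMap (f (n + 1)))
    (hF0 : ∀ z, F 0 z = z)
    (hFrec : ∀ n z, F (n + 1) z = f (n + 1) (F n z))
    (hFlim : IsHolSelfMap Flim)
    (hconv : TendstoLocallyUniformlyOn F Flim atTop unitDisk)
    (hnc : ∃ z ∈ unitDisk, ∃ w ∈ unitDisk, Flim z ≠ Flim w)
    (hh0 : ∀ N z, h N 0 z = z)
    (hhrec : ∀ N n z, h N (n + 1) z = f (N + n + 1) (h N n z)) :
    ∀ N : ℕ, ∃ H : ℂ → ℂ, IsHolSelfMap H ∧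
      (∃ z ∈ unitDisk, ∃ w ∈ unitDisk, H z ≠ H w) ∧
      (∀ z ∈ unitDisk, Flim z = H (F N z)) ∧
      TendstoLocallyUniformlyOn (fun n : ℕ => h N n) H atTop unitDisk :=
  stmt_11_general f F Flim h hf hF0 hFrec hconv hnc hh0 hhrec
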